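/- arXiv:1806.03706 — 4 statements merged into one kernel-verified Lean document; each statement's English description precedes it below -/
import Mathlib

section
/- For every graph $G$, the independence number of $G$ is at least $\sum_{v \in V(G)} \frac{1}{1 + d_G(v)}$, where $d_G(v)$ denotes the degree of $v$ in $G$. -/
/-- An independent set in a simple graph: no two of its vertices are adjacent. -/
def SimpleGraph.IsIndepSet' {V : Type*} (G : SimpleGraph V) (s : Set V) : Prop :=
  ∀ ⦃v⦄, v ∈ s → ∀ ⦃w⦄, w ∈ s → ¬ G.Adj v w

/-!
Greedy argument. Give each vertex `u` of a vertex set `s` the weight `1 / (1 + d_s(u))`, where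
`d_s` is the degree in the subgraph induced by `s`. If `v` has minimum degree in `s`, each of the
`1 + d_s(v)` vertices of its closed neighbourhood `N` weighs at most `1 / (1 + d_s(v))`, so `N`
weighs at most `1`. Put `v` into the independent set and recurse on `s \ N`: degrees there only
drop, so the weights only grow, and the total weight of `s` is at most `1` plus that of `s \ N`.
-/

open Finset

namespace SimpleGraph

variable {V : Type*} (G : SimpleGraph V)

theorem isIndepSet'_iff_isIndepSet {s : Set V} : G.IsIndepSet' s ↔ G.IsIndepSet s :=
  ⟨fun h _ hv _ hw _ ↦ h hv hw, fun h _ hv _ hw hvw ↦ h hv hw (G.ne_of_adj hvw) hvw⟩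

variable [DecidableRel G.Adj]

def degreeWithin (s : Finset V) (v : V) : ℕ := #{w ∈ s | G.Adj v w}

def closedNbhdWithin [DecidableEq V] (s : Finset V) (v : V) : Finset V :=
  insert v {w ∈ s | G.Adj v w}

variable {G}

theorem degreeWithin_mono {s t : Finset V} (hst : s ⊆ t) (v : V) :
    G.degreeWithin s v ≤ G.degreeWithin t v :=
  card_le_card (filter_subset_filter _ hst)

theorem degreeWithin_univ [Fintype V] (v : V) : G.degreeWithin univ v = G.degree v := by
  rw [degreeWithin, ← neighborFinset_eq_filter, card_neighborFinset_eq_degree]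

variable [DecidableEq V] {s : Finset V} {v : V}

theorem self_mem_closedNbhdWithin : v ∈ G.closedNbhdWithin s v :=
  mem_insert_self _ _

theorem closedNbhdWithin_subset (hv : v ∈ s) : G.closedNbhdWithin s v ⊆ s :=
  insert_subset hv (filter_subset _ _)

theorem card_closedNbhdWithin : #(G.closedNbhdWithin s v) = G.degreeWithin s v + 1 :=
  card_insert_of_notMem (by simp)

theorem sum_closedNbhdWithin_le_one_of_min (hv : v ∈ s)
    (hmin : ∀ u ∈ s, G.degreeWithin s v ≤ G.degreeWithin s u) :
    ∑ u ∈ G.closedNbhdWithin s v, (1 : ℝ) / (1 + G.degreeWithin s u) ≤ 1 := by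
  calc ∑ u ∈ G.closedNbhdWithin s v, (1 : ℝ) / (1 + G.degreeWithin s u)
      ≤ ∑ u ∈ G.closedNbhdWithin s v, (1 : ℝ) / (1 + G.degreeWithin s v) :=
        sum_le_sum fun u hu ↦ by gcongr; exact hmin u (closedNbhdWithin_subset hv hu)
    _ = 1 := by
        rw [sum_const, card_closedNbhdWithin, nsmul_eq_mul]
        push_cast
        field_simp
        ring

theorem IsIndepSet.insert_of_subset_sdiff_closedNbhdWithin {t : Finset V}
    (ht : G.IsIndepSet (t : Set V)) (hts : t ⊆ s \ G.closedNbhdWithin s v) :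
    G.IsIndepSet ((insert v t : Finset V) : Set V) := by
  rw [← isClique_compl, coe_insert, isClique_insert, isClique_compl]
  refine ⟨ht, fun w hw hne ↦ ⟨hne, fun hvw ↦ ?_⟩⟩
  obtain ⟨hws, hwN⟩ := mem_sdiff.1 (hts hw)
  exact hwN (mem_insert_of_mem (mem_filter.2 ⟨hws, hvw⟩))

theorem exists_isIndepSet_subset_sum_le_card (s : Finset V) :
    ∃ t ⊆ s, G.IsIndepSet (t : Set V) ∧
      ∑ v ∈ s, (1 : ℝ) / (1 + G.degreeWithin s v) ≤ #t := by
  induction s using Finset.strongInduction with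
  | H s ih =>
  obtain rfl | hs := s.eq_empty_or_nonempty
  · exact ⟨∅, subset_rfl, by simp, by simp⟩
  obtain ⟨v, hv, hmin⟩ := s.exists_min_image (G.degreeWithin s) hs
  set N := G.closedNbhdWithin s v
  have hNs : N ⊆ s := closedNbhdWithin_subset hv
  obtain ⟨t, hts, ht, hcard⟩ := ih (s \ N) (sdiff_ssubset hNs ⟨v, self_mem_closedNbhdWithin⟩)
  have hvt : v ∉ t := fun h ↦ (mem_sdiff.1 (hts h)).2 self_mem_closedNbhdWithin
  refine ⟨insert v t, insert_subset hv (hts.trans sdiff_subset),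
    ht.insert_of_subset_sdiff_closedNbhdWithin hts, ?_⟩
  calc ∑ u ∈ s, (1 : ℝ) / (1 + G.degreeWithin s u)
      = ∑ u ∈ s \ N, (1 : ℝ) / (1 + G.degreeWithin s u)
          + ∑ u ∈ N, (1 : ℝ) / (1 + G.degreeWithin s u) := (sum_sdiff hNs).symm
    _ ≤ ∑ u ∈ s \ N, (1 : ℝ) / (1 + G.degreeWithin (s \ N) u) + 1 := by
        gcongr with u
        · exact degreeWithin_mono sdiff_subset u
        · exact sum_closedNbhdWithin_le_one_of_min hv hmin
    _ ≤ #t + 1 := by gcongr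
    _ = #(insert v t) := by rw [card_insert_of_notMem hvt]; push_cast; rfl

end SimpleGraph

/-- **Caro–Wei theorem.** Every finite graph `G` has an independent set of size at least
`∑_{v} 1/(1 + d_G(v))`; in particular the independence number of `G` is at least this sum. -/
theorem caro_wei {V : Type*} [Fintype V] (G : SimpleGraph V) [DecidableRel G.Adj] :
    ∃ s : Finset V, G.IsIndepSet' (s : Set V) ∧
      (s.card : ℝ) ≥ ∑ v : V, (1 : ℝ) / (1 + G.degree v) := by
  classical
  obtain ⟨s, -, hs, hcard⟩ := G.exists_isIndepSet_subset_sum_le_card univ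
  refine ⟨s, G.isIndepSet'_iff_isIndepSet.2 hs, ?_⟩
  simpa only [SimpleGraph.degreeWithin_univ] using hcard
end

section
/- For every $\gamma > 0$, there exists $\delta > 0$ such that for all sufficiently large $n$ and all $m \le \delta n^{4/3}$, the number of graphs on vertex set $\{1,\dots,n\}$ with exactly $m$ edges containing no copy of $C_4$ (induced or not) is at least $e^{-\gamma m} \binom{\binom{n}{2}}{m}$. -/
/-- A graph contains a (not necessarily induced) copy of `C₄` if it has four distinct
vertices forming a 4-cycle. -/
def SimpleGraph.HasC4 {V : Type*} (G : SimpleGraph V) : Prop :=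
  ∃ v₁ v₂ v₃ v₄ : V,
    v₁ ≠ v₂ ∧ v₁ ≠ v₃ ∧ v₁ ≠ v₄ ∧ v₂ ≠ v₃ ∧ v₂ ≠ v₄ ∧ v₃ ≠ v₄ ∧
    G.Adj v₁ v₂ ∧ G.Adj v₂ v₃ ∧ G.Adj v₃ v₄ ∧ G.Adj v₄ v₁

/-!
Grow `C₄`-free graphs one edge at a time while keeping every degree at most `D = ⌈n^{1/3}⌉`.
A new edge `uv` creates a `C₄` only if `u` and `v` are the ends of a path `u x y v`; a graph
with `k` edges and degrees at most `D` has at most `2kD²` such pairs, and at most `2k/D`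
vertices of degree `D`, which block at most `2kn/D` pairs. For `k ≤ δ n^{4/3}` both counts are
`O(δ n²)`, so all but a fraction `1 - e^{-γ}` of the `C(n,2) - k` non-edges can be added.
Since every admissible edge set of size `k + 1` arises from at most `k + 1` of size `k`, there are
at least `e^{-γ m} C(C(n,2), m)` admissible edge sets of size `m`.
-/

open Finset

namespace Finset

variable {α : Type*} [Fintype α] [DecidableEq α] (P : Finset α → Prop) [DecidablePred P]

lemma sum_card_filter_insert_le (k : ℕ) :
    ∑ s with #s = k ∧ P s, #{a | a ∉ s ∧ P (insert a s)} ≤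
      (k + 1) * #{t | #t = k + 1 ∧ P t} := by
  set F : Finset (Finset α) := {s | #s = k ∧ P s}
  set F' : Finset (Finset α) := {t | #t = k + 1 ∧ P t}
  calc ∑ s ∈ F, #{a | a ∉ s ∧ P (insert a s)}
      ≤ ∑ s ∈ F, #(F'.bipartiteAbove (· ⊆ ·) s) := by
        refine sum_le_sum fun s hs => card_le_card_of_injOn (insert · s) ?_ ?_
        · intro a ha
          simp only [coe_filter, Set.mem_ofPred_eq, mem_univ, true_and] at ha
          simp only [F, mem_filter, mem_univ, true_and] at hs
          simp [bipartiteAbove, F', card_insert_of_notMem ha.1, hs.1, ha.2, subset_insert]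
        · intro a ha b hb hab
          simp only [coe_filter, Set.mem_ofPred_eq, mem_univ, true_and] at ha hb
          exact (insert_inj ha.1).1 hab
    _ = ∑ t ∈ F', #(F.bipartiteBelow (· ⊆ ·) t) :=
        sum_card_bipartiteAbove_eq_sum_card_bipartiteBelow _
    _ ≤ ∑ _t ∈ F', (k + 1) := by
        refine sum_le_sum fun t ht => ?_
        simp only [F', mem_filter, mem_univ, true_and] at ht
        calc #(F.bipartiteBelow (· ⊆ ·) t) ≤ #(t.powersetCard k) := by
              refine card_le_card fun s hs => ?_
              simp only [bipartiteBelow, F, mem_filter, mem_univ, true_and] at hs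
              exact mem_powersetCard.2 ⟨hs.2, hs.1.1⟩
          _ = k + 1 := by rw [card_powersetCard, ht.1, Nat.choose_succ_self_right]
    _ = (k + 1) * #F' := by rw [sum_const, smul_eq_mul, mul_comm]

theorem pow_mul_choose_le_card_filter {c : ℝ} (hc : 0 ≤ c) {M : ℕ} (h₀ : P ∅) (m : ℕ)
    (hext : ∀ s, P s → #s < m → c * (M - #s : ℕ) ≤ #{a | a ∉ s ∧ P (insert a s)}) :
    c ^ m * M.choose m ≤ #{s | #s = m ∧ P s} := by
  induction m with
  | zero =>
    have : ({s | #s = 0 ∧ P s} : Finset (Finset α)).Nonempty := ⟨∅, by simp [h₀]⟩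
    simpa using this.card_pos
  | succ m ih =>
    have ih := ih fun s hs hsm => hext s hs (by omega)
    have hsum := sum_card_filter_insert_le P m
    refine le_of_mul_le_mul_left ?_ (by positivity : (0 : ℝ) < m + 1)
    calc ((m : ℝ) + 1) * (c ^ (m + 1) * M.choose (m + 1))
        = c ^ m * M.choose m * (c * (M - m : ℕ)) := by
          have h : (M.choose (m + 1) : ℝ) * (m + 1) = M.choose m * (M - m : ℕ) := by
            exact_mod_cast Nat.choose_succ_right_eq M m
          linear_combination c ^ (m + 1) * h
      _ ≤ #{s | #s = m ∧ P s} * (c * (M - m : ℕ)) :=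
          mul_le_mul_of_nonneg_right ih (by positivity)
      _ ≤ ∑ s with #s = m ∧ P s, (#{a | a ∉ s ∧ P (insert a s)} : ℝ) := by
          rw [← nsmul_eq_mul]
          exact card_nsmul_le_sum _ _ _ fun s hs => by
            simp only [mem_filter, mem_univ, true_and] at hs
            simpa [hs.1] using hext s hs.2 (by omega)
      _ ≤ (m + 1) * #{t | #t = m + 1 ∧ P t} := by exact_mod_cast hsum

end Finset

lemma mul_sq_add_div_le_mul_sub {x D k δ ε : ℝ} (hx : 1 ≤ x) (hx3 : 2 ≤ x ^ 3) (hxD : x ≤ D)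
    (hD : D ≤ 2 * x) (hk0 : 0 ≤ k) (hk : k ≤ δ * x ^ 4) (hεδ : 80 * δ ≤ ε) (hε : ε ≤ 1) :
    k * (2 * D ^ 2 + 2 * x ^ 3 / D) ≤ ε * (x ^ 3 * (x ^ 3 - 1) / 2 - k) := by
  -- the left side is at most `10 δ x⁶`, the bracket at least `19 x⁶ / 80`
  have hD0 : 0 < D := by linarith
  have hδ : 0 ≤ δ := by nlinarith [pow_pos (by linarith : (0:ℝ) < x) 4]
  have hx4 : x ^ 4 ≤ x ^ 6 := pow_le_pow_right₀ hx (by norm_num)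
  have hD2 : D ^ 2 ≤ 4 * x ^ 2 := by nlinarith
  have hdiv : 2 * x ^ 3 / D ≤ 2 * x ^ 2 := by
    rw [div_le_iff₀ hD0]; nlinarith [sq_nonneg x]
  have h₁ : k * (2 * D ^ 2 + 2 * x ^ 3 / D) ≤ 10 * δ * x ^ 6 := by
    calc k * (2 * D ^ 2 + 2 * x ^ 3 / D) ≤ δ * x ^ 4 * (10 * x ^ 2) := by
          apply mul_le_mul hk (by linarith) (by positivity) (by positivity)
      _ = 10 * δ * x ^ 6 := by ring
  have h₂ : x ^ 6 / 4 ≤ x ^ 3 * (x ^ 3 - 1) / 2 := by nlinarith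
  have h₃ : k ≤ x ^ 6 / 80 := by nlinarith
  nlinarith

namespace SimpleGraph

variable {V : Type*}

lemma adj_of_adj_sup_edge {G : SimpleGraph V} {u v a b : V}
    (h : (G ⊔ edge u v).Adj a b) (hne : s(a, b) ≠ s(u, v)) : G.Adj a b := by
  rw [sup_adj, adj_edge] at h
  exact h.resolve_right fun h' => hne h'.1.symm

lemma edgeSet_fromEdgeSet_of_forall_not_isDiag {s : Finset (Sym2 V)}
    (hs : ∀ e ∈ s, ¬e.IsDiag) :
    (fromEdgeSet (s : Set (Sym2 V))).edgeSet = s := by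
  rw [edgeSet_fromEdgeSet, sdiff_eq_left, Set.disjoint_left]
  exact fun e he => hs e he

lemma fromEdgeSet_insert_mk [DecidableEq V] (s : Finset (Sym2 V)) (u v : V) :
    fromEdgeSet (insert s(u, v) s : Finset (Sym2 V)) = fromEdgeSet s ⊔ edge u v := by
  rw [coe_insert, Set.insert_eq, fromEdgeSet_union, sup_comm]
  rfl

variable [Fintype V] (G : SimpleGraph V) [DecidableRel G.Adj]

lemma card_filter_le_degree_mul_le (D : ℕ) :
    #{v | D ≤ G.degree v} * D ≤ 2 * #G.edgeFinset :=
  calc #{v | D ≤ G.degree v} * D ≤ ∑ v with D ≤ G.degree v, G.degree v := by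
        rw [← smul_eq_mul]
        exact card_nsmul_le_sum _ _ _ fun v hv => (mem_filter.1 hv).2
    _ ≤ ∑ v, G.degree v := sum_le_sum_of_subset (subset_univ _)
    _ = 2 * #G.edgeFinset := G.sum_degrees_eq_twice_card_edges

variable [DecidableEq V]

def c4ClosingPairs : Finset (Sym2 V) :=
  univ.biUnion fun x => (G.neighborFinset x).biUnion fun y =>
    (G.neighborFinset x ×ˢ G.neighborFinset y).image fun p => s(p.1, p.2)

lemma mk_mem_c4ClosingPairs {u x y v : V} (hux : G.Adj u x) (hxy : G.Adj x y)
    (hyv : G.Adj y v) : s(u, v) ∈ G.c4ClosingPairs := by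
  simp only [c4ClosingPairs, mem_biUnion, mem_image, mem_product, mem_neighborFinset]
  exact ⟨x, mem_univ _, y, hxy, (u, v), ⟨hux.symm, hyv⟩, rfl⟩

lemma card_c4ClosingPairs_le {D : ℕ} (hD : ∀ v, G.degree v ≤ D) :
    #G.c4ClosingPairs ≤ 2 * #G.edgeFinset * D ^ 2 :=
  calc #G.c4ClosingPairs ≤ ∑ x, ∑ y ∈ G.neighborFinset x, G.degree x * G.degree y := by
        refine card_biUnion_le.trans <| sum_le_sum fun x _ =>
          card_biUnion_le.trans <| sum_le_sum fun y _ => ?_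
        exact card_image_le.trans (card_product _ _).le
    _ ≤ ∑ x, ∑ _y ∈ G.neighborFinset x, D ^ 2 := by
        gcongr with x _ y
        rw [sq]
        exact Nat.mul_le_mul (hD x) (hD y)
    _ = 2 * #G.edgeFinset * D ^ 2 := by
        simp only [sum_const, smul_eq_mul, card_neighborFinset_eq_degree, ← sum_mul,
          sum_degrees_eq_twice_card_edges]

variable {G}

lemma mem_c4ClosingPairs_of_cycle_sup_edge {u v a b c d : V} (hab : s(a, b) = s(u, v))
    (hac : a ≠ c) (hbd : b ≠ d) (hbc : (G ⊔ edge u v).Adj b c) (hcd : (G ⊔ edge u v).Adj c d)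
    (hda : (G ⊔ edge u v).Adj d a) : s(u, v) ∈ G.c4ClosingPairs := by
  rw [← hab, Sym2.eq_swap]
  refine G.mk_mem_c4ClosingPairs (adj_of_adj_sup_edge hbc ?_) (adj_of_adj_sup_edge hcd ?_)
    (adj_of_adj_sup_edge hda ?_) <;> rw [← hab, Ne, Sym2.eq_iff]
  · grind
  · grind [hbc.ne]
  · grind [hda.ne]

lemma mk_mem_c4ClosingPairs_of_hasC4_sup_edge {u v : V} (hG : ¬G.HasC4)
    (h : (G ⊔ edge u v).HasC4) : s(u, v) ∈ G.c4ClosingPairs := by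
  obtain ⟨a, b, c, d, hab, hac, had, hbc, hbd, hcd, h₁, h₂, h₃, h₄⟩ := h
  by_cases e₁ : s(a, b) = s(u, v)
  · exact mem_c4ClosingPairs_of_cycle_sup_edge e₁ hac hbd h₂ h₃ h₄
  by_cases e₂ : s(b, c) = s(u, v)
  · exact mem_c4ClosingPairs_of_cycle_sup_edge e₂ hbd hac.symm h₃ h₄ h₁
  by_cases e₃ : s(c, d) = s(u, v)
  · exact mem_c4ClosingPairs_of_cycle_sup_edge e₃ hac.symm hbd.symm h₄ h₁ h₂
  by_cases e₄ : s(d, a) = s(u, v)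
  · exact mem_c4ClosingPairs_of_cycle_sup_edge e₄ hbd.symm hac h₁ h₂ h₃
  exact absurd ⟨a, b, c, d, hab, hac, had, hbc, hbd, hcd, adj_of_adj_sup_edge h₁ e₁,
    adj_of_adj_sup_edge h₂ e₂, adj_of_adj_sup_edge h₃ e₃, adj_of_adj_sup_edge h₄ e₄⟩ hG

variable (G)

def highDegreePairs (D : ℕ) : Finset (Sym2 V) :=
  (({v | D ≤ G.degree v} : Finset V) ×ˢ univ).image fun p => s(p.1, p.2)

lemma card_highDegreePairs_le (D : ℕ) :
    #(G.highDegreePairs D) ≤ #{v | D ≤ G.degree v} * Fintype.card V :=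
  card_image_le.trans (card_product _ _).le

variable {G}

lemma degree_lt_of_mk_notMem_highDegreePairs {D : ℕ} {u v : V}
    (h : s(u, v) ∉ G.highDegreePairs D) : G.degree u < D ∧ G.degree v < D := by
  simp only [highDegreePairs, mem_image, mem_product, mem_filter, mem_univ, and_true,
    true_and, Prod.exists, not_exists, not_and] at h
  exact ⟨lt_of_not_ge fun hu => h u v hu rfl, lt_of_not_ge fun hv => h v u hv Sym2.eq_swap⟩

lemma degree_sup_edge_le {D : ℕ} (hD : ∀ w, G.degree w ≤ D) {u v : V} (hu : G.degree u < D)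
    (hv : G.degree v < D) (w : V) : (G ⊔ edge u v).degree w ≤ D := by
  rw [← card_neighborFinset_eq_degree, neighborFinset_sup]
  refine (card_union_le _ _).trans ?_
  rw [card_neighborFinset_eq_degree]
  by_cases hw : w = u ∨ w = v
  · have : #((edge u v).neighborFinset w) ≤ 1 := by
      refine card_le_one.2 fun a ha b hb => ?_
      simp only [mem_neighborFinset, edge_adj] at ha hb
      grind
    rcases hw with rfl | rfl <;> omega
  · have : (edge u v).neighborFinset w = ∅ := by
      ext a
      simp only [mem_neighborFinset, edge_adj, notMem_empty, iff_false]
      grind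
    simpa [this] using hD w

def IsC4FreeWithDegreeLE (D : ℕ) (s : Finset (Sym2 V)) : Prop :=
  (∀ e ∈ s, ¬e.IsDiag) ∧ ¬(fromEdgeSet (s : Set (Sym2 V))).HasC4 ∧
    ∀ v, (fromEdgeSet (s : Set (Sym2 V))).degree v ≤ D

lemma IsC4FreeWithDegreeLE.insert {D : ℕ} {s : Finset (Sym2 V)} (hs : IsC4FreeWithDegreeLE D s)
    {u v : V} (huv : u ≠ v) (hC4 : s(u, v) ∉ (fromEdgeSet (s : Set (Sym2 V))).c4ClosingPairs)
    (hdeg : s(u, v) ∉ (fromEdgeSet (s : Set (Sym2 V))).highDegreePairs D) :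
    IsC4FreeWithDegreeLE D (insert s(u, v) s) := by
  obtain ⟨hdiag, hfree, hD⟩ := hs
  obtain ⟨hu, hv⟩ := degree_lt_of_mk_notMem_highDegreePairs hdeg
  refine ⟨(forall_mem_insert _ _ _).2 ⟨by simpa using huv, hdiag⟩, ?_, fun w => ?_⟩
  · rw [fromEdgeSet_insert_mk]
    exact fun h => hC4 (mk_mem_c4ClosingPairs_of_hasC4_sup_edge hfree h)
  · convert degree_sup_edge_le hD hu hv w using 2
    exact fromEdgeSet_insert_mk s u v

lemma le_card_extensions {D : ℕ} (hD : 0 < D)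
    [DecidablePred (IsC4FreeWithDegreeLE (V := V) D)] {s : Finset (Sym2 V)}
    (hs : IsC4FreeWithDegreeLE D s) :
    ((Fintype.card V).choose 2 : ℝ) - #s - #s * (2 * D ^ 2 + 2 * Fintype.card V / D) ≤
      #{e | e ∉ s ∧ IsC4FreeWithDegreeLE D (insert e s)} := by
  set G := fromEdgeSet (s : Set (Sym2 V))
  set extensions : Finset (Sym2 V) := {e | e ∉ s ∧ IsC4FreeWithDegreeLE D (insert e s)}
  set bad := s ∪ G.c4ClosingPairs ∪ G.highDegreePairs D
  -- for every instance: the lemmas below reach `G.edgeFinset` through different ones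
  have hE [Fintype G.edgeSet] : G.edgeFinset = s := coe_injective <| by
    rw [coe_edgeFinset, edgeSet_fromEdgeSet_of_forall_not_isDiag hs.1]
  have hsub : (⊤ : SimpleGraph V).edgeFinset \ bad ⊆ extensions := by
    intro e he
    induction e using Sym2.ind with
    | _ u v =>
      simp only [bad, mem_sdiff, mem_edgeFinset, mem_edgeSet, top_adj, mem_union, not_or] at he
      exact mem_filter.2 ⟨mem_univ _, he.2.1.1, hs.insert he.1 he.2.1.2 he.2.2⟩
  have hcount : (Fintype.card V).choose 2 ≤
      #extensions + (#s + #G.c4ClosingPairs + #(G.highDegreePairs D)) :=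
    calc (Fintype.card V).choose 2 = #(⊤ : SimpleGraph V).edgeFinset :=
          card_edgeFinset_top_eq_card_choose_two.symm
      _ ≤ #((⊤ : SimpleGraph V).edgeFinset \ bad) + #bad := card_le_card_sdiff_add_card
      _ ≤ #extensions + (#s + #G.c4ClosingPairs + #(G.highDegreePairs D)) :=
          add_le_add (card_le_card hsub)
            ((card_union_le _ _).trans (Nat.add_le_add_right (card_union_le _ _) _))
  have hclosing : (#G.c4ClosingPairs : ℝ) ≤ #s * (2 * D ^ 2) := by
    have := G.card_c4ClosingPairs_le hs.2.2
    simp only [hE] at this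
    exact_mod_cast this.trans_eq (by ring)
  have hhigh : (#(G.highDegreePairs D) : ℝ) ≤ #s * (2 * Fintype.card V / D) := by
    rw [← mul_div_assoc, le_div_iff₀ (by exact_mod_cast hD)]
    have := G.card_filter_le_degree_mul_le D
    simp only [hE] at this
    have key := Nat.mul_le_mul_right D (G.card_highDegreePairs_le D)
    exact_mod_cast key.trans <| by
      rw [mul_right_comm]
      exact (Nat.mul_le_mul_right _ this).trans_eq (by ring)
  have : ((Fintype.card V).choose 2 : ℝ) ≤
      #extensions + (#s + #G.c4ClosingPairs + #(G.highDegreePairs D)) := by exact_mod_cast hcount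
  rw [mul_add]
  linarith

lemma isC4FreeWithDegreeLE_empty (D : ℕ) : IsC4FreeWithDegreeLE (V := V) D ∅ := by
  refine ⟨fun e he => absurd he (notMem_empty e), ?_, fun v => ?_⟩
  · rintro ⟨a, b, -, -, -, -, -, -, -, -, hab, -⟩
    simp at hab
  · simp

lemma card_filter_isC4FreeWithDegreeLE_le (D m : ℕ)
    [DecidablePred (IsC4FreeWithDegreeLE (V := V) D)] :
    #{s : Finset (Sym2 V) | #s = m ∧ IsC4FreeWithDegreeLE D s} ≤
      Nat.card {G : SimpleGraph V // G.edgeSet.ncard = m ∧ ¬G.HasC4} := by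
  classical
  rw [Nat.card_eq_fintype_card, Fintype.card_subtype]
  refine card_le_card_of_injOn (fun s => fromEdgeSet (s : Set (Sym2 V))) (fun s hs => ?_)
    fun s hs t ht hst => ?_
  · simp only [coe_filter, Set.mem_ofPred_eq, mem_univ, true_and] at hs
    simp only [coe_filter, Set.mem_ofPred_eq, mem_univ, true_and]
    rw [edgeSet_fromEdgeSet_of_forall_not_isDiag hs.2.1, Set.ncard_coe_finset]
    exact ⟨hs.1, hs.2.2.1⟩
  · simp only [coe_filter, Set.mem_ofPred_eq, mem_univ, true_and] at hs ht
    have := congrArg edgeSet hst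
    rwa [edgeSet_fromEdgeSet_of_forall_not_isDiag hs.2.1,
      edgeSet_fromEdgeSet_of_forall_not_isDiag ht.2.1, coe_inj] at this

lemma one_sub_mul_le_card_extensions {n : ℕ} (hV : Fintype.card V = n) (hn : 2 ≤ n) {ε : ℝ}
    (hε₀ : 0 < ε) (hε₁ : ε ≤ 1)
    [DecidablePred (IsC4FreeWithDegreeLE (V := V) ⌈(n : ℝ) ^ (1 / 3 : ℝ)⌉₊)]
    {s : Finset (Sym2 V)} (hs : IsC4FreeWithDegreeLE ⌈(n : ℝ) ^ (1 / 3 : ℝ)⌉₊ s)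
    (hk : (#s : ℝ) ≤ ε / 80 * n ^ (4 / 3 : ℝ)) :
    (1 - ε) * (n.choose 2 - #s : ℕ) ≤
      #{e | e ∉ s ∧ IsC4FreeWithDegreeLE ⌈(n : ℝ) ^ (1 / 3 : ℝ)⌉₊ (insert e s)} := by
  have hcard := le_card_extensions (Nat.ceil_pos.2 (by positivity)) hs
  rw [hV] at hcard
  set x := (n : ℝ) ^ (1 / 3 : ℝ)
  have hn₀ : (0 : ℝ) ≤ n := n.cast_nonneg
  have hx : 1 ≤ x := Real.one_le_rpow (by exact_mod_cast (by omega : 1 ≤ n)) (by norm_num)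
  have hx₃ : x ^ 3 = n := by
    rw [← Real.rpow_natCast, ← Real.rpow_mul hn₀]; norm_num
  have hx₄ : (n : ℝ) ^ (4 / 3 : ℝ) = x ^ 4 := by
    rw [← Real.rpow_natCast, ← Real.rpow_mul hn₀]; norm_num
  have hM : (n.choose 2 : ℝ) = x ^ 3 * (x ^ 3 - 1) / 2 := by
    rw [Nat.cast_choose_two, hx₃]
  have hbound := mul_sq_add_div_le_mul_sub hx (by rw [hx₃]; exact_mod_cast hn) (Nat.le_ceil x)
    (Nat.ceil_le_two_mul (by linarith)) (#s).cast_nonneg (hx₄ ▸ hk)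
    (by linarith : 80 * (ε / 80) ≤ ε) hε₁
  rw [← hM, hx₃] at hbound
  have hsM : #s ≤ n.choose 2 := by
    have : (0 : ℝ) ≤ ε * (n.choose 2 - #s) := le_trans (by positivity) hbound
    exact_mod_cast sub_nonneg.1 (nonneg_of_mul_nonneg_right this hε₀)
  rw [Nat.cast_sub hsM]
  linarith

end SimpleGraph

/-- For every `γ > 0` there is `δ > 0` such that for all sufficiently large `n` and all
`m ≤ δ n^{4/3}`, the number of `C₄`-free graphs on `{1,…,n}` with `m` edges is at least
`e^{-γ m} · C(C(n,2), m)`. -/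
theorem count_C4_free_lower (γ : ℝ) (hγ : 0 < γ) :
    ∃ δ : ℝ, 0 < δ ∧ ∃ N : ℕ, ∀ n : ℕ, N ≤ n → ∀ m : ℕ,
      (m : ℝ) ≤ δ * (n : ℝ) ^ (4 / 3 : ℝ) →
      (Nat.card {G : SimpleGraph (Fin n) // G.edgeSet.ncard = m ∧ ¬ G.HasC4} : ℝ) ≥
        Real.exp (-γ * m) * ((n.choose 2).choose m : ℝ) := by
  classical
  set ε := 1 - Real.exp (-γ)
  have hε₀ : 0 < ε := sub_pos.2 (Real.exp_lt_one_iff.2 (neg_lt_zero.2 hγ))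
  have hε₁ : ε ≤ 1 := sub_le_self _ (Real.exp_nonneg _)
  refine ⟨ε / 80, by positivity, 2, fun n hn m hm => ?_⟩
  set D := ⌈(n : ℝ) ^ (1 / 3 : ℝ)⌉₊
  have hext (s : Finset (Sym2 (Fin n))) (hs : SimpleGraph.IsC4FreeWithDegreeLE D s)
      (hsm : #s < m) :
      Real.exp (-γ) * (n.choose 2 - #s : ℕ) ≤
        #{e | e ∉ s ∧ SimpleGraph.IsC4FreeWithDegreeLE D (insert e s)} := by
    have hk : (#s : ℝ) ≤ ε / 80 * n ^ (4 / 3 : ℝ) := le_trans (by exact_mod_cast hsm.le) hm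
    simpa only [ε, sub_sub_cancel] using
      SimpleGraph.one_sub_mul_le_card_extensions (Fintype.card_fin n) hn hε₀ hε₁ hs hk
  calc Real.exp (-γ * m) * ((n.choose 2).choose m : ℝ)
      = Real.exp (-γ) ^ m * (n.choose 2).choose m := by
        rw [← Real.exp_nat_mul, mul_comm (m : ℝ)]
    _ ≤ #{s | #s = m ∧ SimpleGraph.IsC4FreeWithDegreeLE D s} :=
        pow_mul_choose_le_card_filter _ (Real.exp_nonneg _)
          (SimpleGraph.isC4FreeWithDegreeLE_empty D) m hext
    _ ≤ Nat.card {G : SimpleGraph (Fin n) // G.edgeSet.ncard = m ∧ ¬ G.HasC4} := by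
        exact_mod_cast SimpleGraph.card_filter_isC4FreeWithDegreeLE_le D m
end

section
/- Let $n, m, \varepsilon$ be such that $m \gg n$ and $n$ is sufficiently large, with $\varepsilon \in (0,1)$. Then the number of graphs on vertex set $\{1,\dots,n\}$ with $m$ edges that are $\varepsilon$-close to a split graph is at most $n^{\varepsilon m}$ times the number of split graphs on $\{1,\dots,n\}$ with $m$ edges. More precisely, $|\mathcal{S}_{n,m}(\varepsilon)| \le |\mathcal{S}_{n,m}| \cdot \binom{m}{\varepsilon m} \cdot \binom{\binom{n}{2}}{\varepsilon m}$. -/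
attribute [local instance] Classical.propDecidable

/-- A split graph: the vertex set partitions into a clique and an independent set. -/
def SimpleGraph.IsSplit {V : Type*} (G : SimpleGraph V) : Prop :=
  ∃ K : Set V, G.IsClique K ∧ G.IsIndepSet' Kᶜ

/-- `G` is `ε`-close to a split graph: it can be transformed into a split graph (with the
same number `m` of edges) by deleting at most `ε m` edges and adding at most `ε m` edges. -/
def closeToSplit {V : Type*} (ε : ℝ) (m : ℕ) (G : SimpleGraph V) : Prop :=
  ∃ H : SimpleGraph V, H.IsSplit ∧ H.edgeSet.ncard = m ∧
    ((G.edgeSet \ H.edgeSet).ncard : ℝ) ≤ ε * m ∧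
    ((H.edgeSet \ G.edgeSet).ncard : ℝ) ≤ ε * m

open Finset in
lemma exists_decomp {n m : ℕ} {ε : ℝ} (hε0 : 0 ≤ ε) (hε1 : ε ≤ 1)
    (G : SimpleGraph (Fin n)) (hGm : G.edgeSet.ncard = m) (hC : closeToSplit ε m G) :
    ∃ H : SimpleGraph (Fin n), H.IsSplit ∧ H.edgeSet.ncard = m ∧
      ∃ D ⊆ H.edgeFinset, D.card = ⌊ε * m⌋₊ ∧
      ∃ A : Finset (Sym2 (Fin n)), (∀ e ∈ A, ¬ e.IsDiag) ∧ A.card = ⌊ε * m⌋₊ ∧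
      G.edgeFinset = (H.edgeFinset \ D) ∪ A := by
  classical
  obtain ⟨H, hsplit, hHm, hadd, hdel⟩ := hC
  set k := ⌊ε * m⌋₊ with hk
  have hcardH : H.edgeFinset.card = m := by
    have := hHm; rwa [Set.ncard_eq_toFinset_card'] at this
  have hcardG : G.edgeFinset.card = m := by
    have := hGm; rwa [Set.ncard_eq_toFinset_card'] at this
  set D₀ : Finset (Sym2 (Fin n)) := H.edgeFinset \ G.edgeFinset with hD₀
  set A₀ : Finset (Sym2 (Fin n)) := G.edgeFinset \ H.edgeFinset with hA₀
  have hsetD : (H.edgeSet \ G.edgeSet).ncard = D₀.card := by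
    rw [hD₀, ← Set.ncard_coe_finset, Finset.coe_sdiff, SimpleGraph.coe_edgeFinset,
      SimpleGraph.coe_edgeFinset]
  have hsetA : (G.edgeSet \ H.edgeSet).ncard = A₀.card := by
    rw [hA₀, ← Set.ncard_coe_finset, Finset.coe_sdiff, SimpleGraph.coe_edgeFinset,
      SimpleGraph.coe_edgeFinset]
  have hDk : D₀.card ≤ k := Nat.le_floor (by rw [← hsetD] at *; exact_mod_cast hdel)
  have hAk : A₀.card ≤ k := Nat.le_floor (by rw [← hsetA] at *; exact_mod_cast hadd)
  have hkm : k ≤ m := by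
    have : ε * m ≤ (m : ℝ) := by nlinarith [Nat.cast_nonneg (α := ℝ) m]
    calc k ≤ ⌊(m : ℝ)⌋₊ := Nat.floor_le_floor this
      _ = m := Nat.floor_natCast m
  have hsum1 : D₀.card + (H.edgeFinset ∩ G.edgeFinset).card = m := by
    rw [hD₀, Finset.card_sdiff_add_card_inter, hcardH]
  have hsum2 : A₀.card + (G.edgeFinset ∩ H.edgeFinset).card = m := by
    rw [hA₀, Finset.card_sdiff_add_card_inter, hcardG]
  have hinter : (G.edgeFinset ∩ H.edgeFinset).card = (H.edgeFinset ∩ G.edgeFinset).card := by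
    rw [Finset.inter_comm]
  have hDA : D₀.card = A₀.card := by omega
  have hPle : k - D₀.card ≤ (H.edgeFinset ∩ G.edgeFinset).card := by omega
  obtain ⟨P, hPsub, hPcard⟩ := Finset.exists_subset_card_eq hPle
  have hPH : P ⊆ H.edgeFinset := hPsub.trans Finset.inter_subset_left
  have hPG : P ⊆ G.edgeFinset := hPsub.trans Finset.inter_subset_right
  have hdisjD : Disjoint D₀ P := Finset.disjoint_left.2 fun e he hep =>
    (Finset.mem_sdiff.1 he).2 (hPG hep)
  have hdisjA : Disjoint A₀ P := Finset.disjoint_left.2 fun e he hep =>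
    (Finset.mem_sdiff.1 he).2 (hPH hep)
  refine ⟨H, hsplit, hHm, D₀ ∪ P, ?_, ?_, A₀ ∪ P, ?_, ?_, ?_⟩
  · exact Finset.union_subset (Finset.sdiff_subset) hPH
  · rw [Finset.card_union_of_disjoint hdisjD, hPcard]; omega
  · intro e he
    rcases Finset.mem_union.1 he with h | h
    · exact G.not_isDiag_of_mem_edgeSet (SimpleGraph.mem_edgeFinset.1 (Finset.mem_sdiff.1 h).1)
    · exact G.not_isDiag_of_mem_edgeSet (SimpleGraph.mem_edgeFinset.1 (hPG h))
  · rw [Finset.card_union_of_disjoint hdisjA, hPcard]; omega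
  · ext e
    have hPe : e ∈ P → e ∈ H.edgeFinset ∧ e ∈ G.edgeFinset := fun h => ⟨hPH h, hPG h⟩
    simp only [Finset.mem_union, Finset.mem_sdiff, hD₀, hA₀]
    constructor
    · intro hG
      rcases Classical.em (e ∈ P) with hP | hP
      · exact Or.inr (Or.inr hP)
      · rcases Classical.em (e ∈ H.edgeFinset) with hH | hH
        · exact Or.inl ⟨hH, fun h => h.elim (fun h' => h'.2 hG) hP⟩
        · exact Or.inr (Or.inl ⟨hG, hH⟩)
    · rintro (⟨hH, hn⟩ | ⟨hG, -⟩ | hP)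
      · by_contra hG; exact hn (Or.inl ⟨hH, hG⟩)
      · exact hG
      · exact (hPe hP).2

/-- The number of graphs on `{1,…,n}` with `m` edges that are `ε`-close to a split graph
is at most `|S_{n,m}| · C(m, εm) · C(C(n,2), εm)`, where `S_{n,m}` is the family of split
graphs on `{1,…,n}` with `m` edges. -/
theorem count_close_to_split (n m : ℕ) (ε : ℝ) (hε0 : 0 < ε) (hε1 : ε < 1) :
    (Nat.card {G : SimpleGraph (Fin n) // G.edgeSet.ncard = m ∧ closeToSplit ε m G}) ≤
      (Nat.card {G : SimpleGraph (Fin n) // G.IsSplit ∧ G.edgeSet.ncard = m}) *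
        m.choose ⌊ε * m⌋₊ * (n.choose 2).choose ⌊ε * m⌋₊ := by
  classical
  set k := ⌊ε * m⌋₊ with hk
  set T : Finset (Sym2 (Fin n)) := Finset.univ.filter (fun e => ¬ e.IsDiag) with hT
  have hTcard : T.card = n.choose 2 := by
    rw [hT, ← Fintype.card_subtype, Sym2.card_subtype_not_diag, Fintype.card_fin]
  set SSub := {G : SimpleGraph (Fin n) // G.IsSplit ∧ G.edgeSet.ncard = m} with hSSub
  have key : ∀ G : {G : SimpleGraph (Fin n) // G.edgeSet.ncard = m ∧ closeToSplit ε m G},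
      ∃ H : SSub, ∃ D ∈ (H.1.edgeFinset.powersetCard k), ∃ A ∈ T.powersetCard k,
        G.1.edgeFinset = (H.1.edgeFinset \ D) ∪ A := by
    rintro ⟨G, hGm, hC⟩
    obtain ⟨H, hsplit, hHm, D, hDsub, hDcard, A, hAdiag, hAcard, hEq⟩ :=
      exists_decomp hε0.le hε1.le G hGm hC
    refine ⟨⟨H, hsplit, hHm⟩, D, ?_, A, ?_, hEq⟩
    · exact Finset.mem_powersetCard.2 ⟨hDsub, hDcard⟩
    · refine Finset.mem_powersetCard.2 ⟨fun e he => ?_, hAcard⟩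
      simp only [hT, Finset.mem_filter, Finset.mem_univ, true_and]
      exact hAdiag e he
  choose Hf Df hDf Af hAf hEqf using key
  set Y := Σ H : SSub, ({D // D ∈ H.1.edgeFinset.powersetCard k} ×
      {A // A ∈ T.powersetCard k}) with hY
  have hinj : Function.Injective
      (fun G : {G : SimpleGraph (Fin n) // G.edgeSet.ncard = m ∧ closeToSplit ε m G} =>
        (⟨Hf G, ⟨Df G, hDf G⟩, ⟨Af G, hAf G⟩⟩ : Y)) := by
    intro G₁ G₂ h
    have hH : Hf G₁ = Hf G₂ := congrArg Sigma.fst h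
    have hD : Df G₁ = Df G₂ := congrArg (fun y : Y => (y.2.1 : Finset (Sym2 (Fin n)))) h
    have hA : Af G₁ = Af G₂ := congrArg (fun y : Y => (y.2.2 : Finset (Sym2 (Fin n)))) h
    have : G₁.1.edgeFinset = G₂.1.edgeFinset := by
      rw [hEqf G₁, hEqf G₂, hH, hD, hA]
    exact Subtype.ext (SimpleGraph.edgeFinset_inj.1 this)
  calc Nat.card {G : SimpleGraph (Fin n) // G.edgeSet.ncard = m ∧ closeToSplit ε m G}
      ≤ Nat.card Y := Nat.card_le_card_of_injective _ hinj
    _ = (Nat.card SSub) * m.choose k * (n.choose 2).choose k := by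
        rw [Nat.card_eq_fintype_card, Fintype.card_sigma]
        have hterm : ∀ H : SSub,
            Fintype.card ({D // D ∈ H.1.edgeFinset.powersetCard k} ×
              {A // A ∈ T.powersetCard k}) = m.choose k * (n.choose 2).choose k := by
          intro H
          have hcardH : H.1.edgeFinset.card = m := by
            have := H.2.2; rwa [Set.ncard_eq_toFinset_card'] at this
          rw [Fintype.card_prod, Fintype.card_coe, Fintype.card_coe,
            Finset.card_powersetCard, Finset.card_powersetCard, hcardH, hTcard]
        simp only [hterm, Finset.sum_const, smul_eq_mul, Finset.card_univ,
          Nat.card_eq_fintype_card, mul_assoc]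
end

section
/- For every $\gamma > 0$, there exists a constant $c$ such that for all sufficiently large $n$ and all $m$ with $1 \ll m \le n^2/4$: the number of split graphs on vertex set $\{1,\dots,n\}$ with exactly $m$ edges is at least $N_{n,m}(\ell)$ for $\ell = \lceil \sqrt{m/\log(n^2/m)} \rceil$, and this quantity satisfies $N_{n,m}(\ell) \ge \left(\frac{c\, n}{\sqrt{m \log(n^2/m)}}\right)^m$ whenever $m \le \lambda n^2$ for a sufficiently small absolute constant $\lambda$. -/
/-- `N n m ℓ`: the number of graphs on `{0,…,n-1}` with exactly `m` edges that are complete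
on the first `ℓ` vertices and empty on the remaining `n - ℓ` vertices. -/
noncomputable def Nsplit (n m ℓ : ℕ) : ℕ :=
  Nat.card {G : SimpleGraph (Fin n) // G.edgeSet.ncard = m ∧
    (∀ v w : Fin n, (v : ℕ) < ℓ → (w : ℕ) < ℓ → v ≠ w → G.Adj v w) ∧
    (∀ v w : Fin n, ℓ ≤ (v : ℕ) → ℓ ≤ (w : ℕ) → ¬ G.Adj v w)}

/-- `Scard n m`: the number of split graphs on `{0,…,n-1}` with exactly `m` edges. -/
noncomputable def Scard (n m : ℕ) : ℕ :=
  Nat.card {G : SimpleGraph (Fin n) // G.IsSplit ∧ G.edgeSet.ncard = m}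

open Finset SimpleGraph Real

namespace Finset

variable {V : Type*} [DecidableEq V]

def innerEdges (A : Finset V) : Finset (Sym2 V) := A.offDiag.image (Function.uncurry Sym2.mk)

def crossEdges (A B : Finset V) : Finset (Sym2 V) := (A ×ˢ B).image (Function.uncurry Sym2.mk)

variable {A B : Finset V}

lemma mk_mem_innerEdges {v w : V} : s(v, w) ∈ A.innerEdges ↔ v ∈ A ∧ w ∈ A ∧ v ≠ w := by
  simp only [innerEdges, mem_image, mem_offDiag, Prod.exists, Function.uncurry_apply_pair,
    Sym2.eq_iff]
  constructor
  · rintro ⟨a, b, ⟨ha, hb, hab⟩, ⟨rfl, rfl⟩ | ⟨rfl, rfl⟩⟩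
    exacts [⟨ha, hb, hab⟩, ⟨hb, ha, hab.symm⟩]
  · rintro ⟨hv, hw, hvw⟩
    exact ⟨v, w, ⟨hv, hw, hvw⟩, Or.inl ⟨rfl, rfl⟩⟩

lemma mk_mem_crossEdges {v w : V} :
    s(v, w) ∈ crossEdges A B ↔ v ∈ A ∧ w ∈ B ∨ w ∈ A ∧ v ∈ B := by
  simp only [crossEdges, mem_image, mem_product, Prod.exists, Function.uncurry_apply_pair,
    Sym2.eq_iff]
  constructor
  · rintro ⟨a, b, ⟨ha, hb⟩, ⟨rfl, rfl⟩ | ⟨rfl, rfl⟩⟩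
    exacts [Or.inl ⟨ha, hb⟩, Or.inr ⟨ha, hb⟩]
  · rintro (⟨hv, hw⟩ | ⟨hw, hv⟩)
    exacts [⟨v, w, ⟨hv, hw⟩, Or.inl ⟨rfl, rfl⟩⟩, ⟨w, v, ⟨hw, hv⟩, Or.inr ⟨rfl, rfl⟩⟩]

lemma card_innerEdges (A : Finset V) : #A.innerEdges = (#A).choose 2 :=
  Sym2.card_image_offDiag A

lemma card_crossEdges (h : Disjoint A B) : #(crossEdges A B) = #A * #B := by
  rw [crossEdges, card_image_of_injOn, card_product]
  rintro ⟨a, b⟩ hab ⟨c, d⟩ hcd heq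
  simp only [coe_product, Set.mem_prod, mem_coe, Function.uncurry_apply_pair, Sym2.eq_iff] at *
  rcases heq with ⟨rfl, rfl⟩ | ⟨rfl, rfl⟩
  · rfl
  · exact absurd hab.1 (disjoint_right.1 h hcd.2)

lemma disjoint_innerEdges_crossEdges (h : Disjoint A B) :
    Disjoint A.innerEdges (crossEdges A B) := by
  rw [disjoint_left]
  intro e he he'
  induction e with
  | _ v w =>
  rw [mk_mem_innerEdges] at he
  rcases mk_mem_crossEdges.1 he' with ⟨_, hw⟩ | ⟨_, hv⟩
  exacts [disjoint_left.1 h he.2.1 hw, disjoint_left.1 h he.1 hv]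

lemma not_isDiag_of_mem_innerEdges_union_crossEdges (h : Disjoint A B) {e : Sym2 V}
    (he : e ∈ A.innerEdges ∪ crossEdges A B) : ¬ e.IsDiag := by
  induction e with
  | _ v w =>
  rw [Sym2.mk_isDiag_iff]
  rintro rfl
  rcases mem_union.1 he with he | he
  · exact (mk_mem_innerEdges.1 he).2.2 rfl
  · rcases mk_mem_crossEdges.1 he with ⟨hv, hw⟩ | ⟨hv, hw⟩ <;> exact disjoint_left.1 h hv hw

end Finset

namespace SimpleGraph

variable {V : Type*} [Fintype V] [DecidableEq V]

lemma edgeSet_fromEdgeSet_innerEdges_union {A : Finset V} {F : Finset (Sym2 V)}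
    (hF : F ⊆ crossEdges A Aᶜ) :
    (fromEdgeSet (↑(A.innerEdges ∪ F) : Set (Sym2 V))).edgeSet = ↑(A.innerEdges ∪ F) := by
  rw [edgeSet_fromEdgeSet, sdiff_eq_left, Set.disjoint_left]
  intro e he
  exact not_isDiag_of_mem_innerEdges_union_crossEdges disjoint_compl_right
    (union_subset_union subset_rfl hF he)

theorem choose_le_card_completeOn_emptyOff (A : Finset V) {m : ℕ} (hm : (#A).choose 2 ≤ m) :
    (#A * #Aᶜ).choose (m - (#A).choose 2) ≤ Nat.card {G : SimpleGraph V // G.edgeSet.ncard = m ∧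
      (∀ v w, v ∈ A → w ∈ A → v ≠ w → G.Adj v w) ∧ ∀ v w, v ∉ A → w ∉ A → ¬ G.Adj v w} := by
  set b := m - (#A).choose 2
  -- the injection is `F ↦ fromEdgeSet (A.innerEdges ∪ F)` on `b`-subsets `F` of the cross edges
  have hI : ∀ F ∈ powersetCard b (crossEdges A Aᶜ), Disjoint A.innerEdges F := fun F hF =>
    (disjoint_innerEdges_crossEdges disjoint_compl_right).mono_right (mem_powersetCard.1 hF).1
  have hG : ∀ F ∈ powersetCard b (crossEdges A Aᶜ),
      let G := fromEdgeSet (↑(A.innerEdges ∪ F) : Set (Sym2 V))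
      G.edgeSet.ncard = m ∧ (∀ v w, v ∈ A → w ∈ A → v ≠ w → G.Adj v w) ∧
        ∀ v w, v ∉ A → w ∉ A → ¬ G.Adj v w := by
    intro F hF G
    have hFI := hI F hF
    rw [mem_powersetCard] at hF
    refine ⟨?_, fun v w hv hw hvw => ?_, fun v w hv hw hvw => ?_⟩
    · rw [edgeSet_fromEdgeSet_innerEdges_union hF.1, Set.ncard_coe_finset,
        card_union_of_disjoint hFI, card_innerEdges, hF.2]
      omega
    · exact (fromEdgeSet_adj _).2 ⟨mem_union_left _ (mk_mem_innerEdges.2 ⟨hv, hw, hvw⟩), hvw⟩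
    · rw [fromEdgeSet_adj, coe_union, Set.mem_union, mem_coe, mem_coe] at hvw
      rcases hvw.1 with h | h
      · exact hv (mk_mem_innerEdges.1 h).1
      · rcases mk_mem_crossEdges.1 (hF.1 h) with ⟨h', _⟩ | ⟨h', _⟩
        exacts [hv h', hw h']
  rw [← card_crossEdges disjoint_compl_right, ← card_powersetCard, ← Nat.card_eq_finsetCard]
  refine Nat.card_le_card_of_injective (fun F => ⟨_, hG F.1 F.2⟩) fun F F' h => ?_
  have h' := congrArg (fun G : {G : SimpleGraph V // _} => G.1.edgeSet) h
  simp only [edgeSet_fromEdgeSet_innerEdges_union (mem_powersetCard.1 F.2).1,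
    edgeSet_fromEdgeSet_innerEdges_union (mem_powersetCard.1 F'.2).1, coe_inj] at h'
  ext1
  rw [← union_sdiff_cancel_left (hI _ F.2), h', union_sdiff_cancel_left (hI _ F'.2)]

end SimpleGraph

theorem Nat.pow_le_pow_mul_choose {a b : ℕ} (h : b ≤ a) : a ^ b ≤ b ^ b * a.choose b := by
  have key : a ^ b * b.descFactorial b ≤ b ^ b * a.descFactorial b := by
    simp only [Nat.descFactorial_eq_prod_range]
    calc a ^ b * ∏ i ∈ range b, (b - i) = ∏ i ∈ range b, a * (b - i) := by
          rw [prod_mul_distrib, prod_const, card_range]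
      _ ≤ ∏ i ∈ range b, b * (a - i) := prod_le_prod' fun i _ => by
          rw [Nat.mul_sub, Nat.mul_sub, mul_comm a b]
          exact Nat.sub_le_sub_left (Nat.mul_le_mul_right i h) _
      _ = b ^ b * ∏ i ∈ range b, (a - i) := by
          rw [prod_mul_distrib, prod_const, card_range]
  rw [Nat.descFactorial_self, Nat.descFactorial_eq_factorial_mul_choose, mul_left_comm] at key
  exact Nat.le_of_mul_le_mul_right (by linarith [key]) b.factorial_pos

theorem pow_le_choose_of_mul_le {a b : ℕ} {c : ℝ} (hc : 0 ≤ c) (hca : c * b ≤ a) (hba : b ≤ a) :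
    c ^ b ≤ a.choose b := by
  obtain rfl | hb := b.eq_zero_or_pos
  · simp
  have : (c * b) ^ b ≤ (b : ℝ) ^ b * a.choose b :=
    (pow_le_pow_left₀ (by positivity) hca b).trans (by exact_mod_cast Nat.pow_le_pow_mul_choose hba)
  rw [mul_pow, mul_comm] at this
  exact le_of_mul_le_mul_left this (by positivity)

theorem Nat.choose_two_le_sub_one_sq (l : ℕ) : l.choose 2 ≤ (l - 1) ^ 2 := by
  rw [Nat.choose_two_right]
  refine Nat.div_le_of_le_mul ?_
  rcases l with _ | l
  · simp
  · simp only [Nat.add_sub_cancel]; nlinarith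

theorem choose_two_ceil_le_sq {y : ℝ} (hy : 0 ≤ y) : ((⌈y⌉₊.choose 2 : ℕ) : ℝ) ≤ y ^ 2 := by
  have h : ⌈y⌉₊.choose 2 ≤ ⌊y⌋₊ ^ 2 :=
    (Nat.choose_two_le_sub_one_sq _).trans
      (Nat.pow_le_pow_left (by have := Nat.ceil_le_floor_add_one y; omega) 2)
  calc ((⌈y⌉₊.choose 2 : ℕ) : ℝ) ≤ (⌊y⌋₊ : ℝ) ^ 2 := by exact_mod_cast h
    _ ≤ y ^ 2 := by gcongr; exact Nat.floor_le hy

theorem pow_le_two_pow_of_sq_le_exp {x L : ℝ} {k m : ℕ} (hx : 0 ≤ x) (hxL : x ^ 2 ≤ exp L)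
    (hkL : k * L ≤ m) : x ^ k ≤ 2 ^ m := by
  refine (pow_le_pow_iff_left₀ (by positivity) (by positivity) two_ne_zero).1 ?_
  calc (x ^ k) ^ 2 = (x ^ 2) ^ k := by ring
    _ ≤ exp L ^ k := by gcongr
    _ = exp (k * L) := (exp_nat_mul L k).symm
    _ ≤ exp 1 ^ m := by rw [← exp_nat_mul, mul_one]; exact exp_le_exp.2 hkL
    _ ≤ 4 ^ m := by gcongr; linarith [exp_one_lt_d9]
    _ = (2 ^ m) ^ 2 := by rw [← pow_mul, mul_comm, pow_mul]; norm_num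

theorem four_mul_le_exp {L : ℝ} (hL : 8 ≤ L) : 4 * L ≤ exp L := by
  nlinarith [quadratic_le_exp_of_nonneg (by linarith : (0 : ℝ) ≤ L)]

section

variable {n m : ℕ} {L : ℝ}

theorem ceil_sqrt_div_le_half (hm : 0 < m) (hL : 8 ≤ L) (hn : (n : ℝ) ^ 2 = m * exp L) :
    (⌈√(m / L)⌉₊ : ℝ) ≤ n / 2 := by
  set y := √(m / L)
  have hy : y ^ 2 = m / L := sq_sqrt (by positivity)
  have hmL : (m : ℝ) / L ≤ m / 8 := div_le_div_of_nonneg_left (by positivity) (by norm_num) hL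
  have hm1 : (1 : ℝ) ≤ m := by exact_mod_cast hm
  have hn2 : 32 * (m : ℝ) ≤ n ^ 2 := by
    rw [hn]; nlinarith [four_mul_le_exp hL]
  have hℓ : (⌈y⌉₊ : ℝ) ^ 2 ≤ (y + 1) ^ 2 := by
    gcongr; exact (Nat.ceil_lt_add_one (sqrt_nonneg _)).le
  refine (pow_le_pow_iff_left₀ (by positivity) (by positivity) two_ne_zero).1 ?_
  nlinarith [sq_nonneg (y - 1)]

theorem ceil_sqrt_div_le (hm : 0 < m) (hL : 8 ≤ L) (hn : (n : ℝ) ^ 2 = m * exp L) :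
    ⌈√(m / L)⌉₊ ≤ n := by
  exact_mod_cast (ceil_sqrt_div_le_half hm hL hn).trans (half_le_self (Nat.cast_nonneg n))

theorem choose_two_ceil_sqrt_div_mul_le (hL : 0 < L) :
    (⌈√(m / L)⌉₊.choose 2 : ℝ) * L ≤ m := by
  have := choose_two_ceil_le_sq (sqrt_nonneg (m / L))
  rwa [sq_sqrt (by positivity), le_div_iff₀ hL] at this

theorem choose_two_ceil_sqrt_div_le (hL : 1 ≤ L) : ⌈√(m / L)⌉₊.choose 2 ≤ m := by
  have := choose_two_ceil_sqrt_div_mul_le (m := m) (by linarith)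
  exact_mod_cast (show (⌈√(m / L)⌉₊.choose 2 : ℝ) ≤ m by nlinarith [Nat.cast_nonneg (α := ℝ) m])

theorem pow_le_choose_ceil_sqrt (hm : 0 < m) (hL : 8 ≤ L) (hn : (n : ℝ) ^ 2 = m * exp L) :
    (n / √(m * L) / 4) ^ m ≤
      ((⌈√(m / L)⌉₊ * (n - ⌈√(m / L)⌉₊)).choose (m - ⌈√(m / L)⌉₊.choose 2) : ℝ) := by
  have hkL := choose_two_ceil_sqrt_div_mul_le (m := m) (by linarith : 0 < L)
  have hkm := choose_two_ceil_sqrt_div_le (m := m) (by linarith : 1 ≤ L)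
  have hℓ := ceil_sqrt_div_le_half hm hL hn
  have hℓn := ceil_sqrt_div_le hm hL hn
  set y := √(m / L)
  set ℓ := ⌈y⌉₊
  set k := ℓ.choose 2
  set x := n / √(m * L)
  have hm0 : (0 : ℝ) < m := by exact_mod_cast hm
  have hx2 : x ^ 2 * L = exp L := by
    rw [div_pow, sq_sqrt (by positivity), hn]; field_simp
  have hxm : x * m = y * n := by
    simp only [x, y, sqrt_mul hm0.le, sqrt_div hm0.le]
    field_simp
    rw [sq_sqrt hm0.le]
  have hx : 2 ≤ x := by
    have : 2 ^ 2 ≤ x ^ 2 :=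
      le_of_mul_le_mul_right (by linarith [four_mul_le_exp hL]) (by linarith : 0 < L)
    exact (pow_le_pow_iff_left₀ (by norm_num) (by positivity) two_ne_zero).1 this
  have hcross : x / 2 * ((m - k : ℕ) : ℝ) ≤ ((ℓ * (n - ℓ) : ℕ) : ℝ) := by
    push_cast [hkm, hℓn]
    calc x / 2 * (m - k) ≤ x / 2 * m := by gcongr; simp
      _ = y * (n / 2) := by linear_combination hxm / 2
      _ ≤ ℓ * (n - ℓ) := by gcongr; exacts [Nat.le_ceil y, by linarith]
  have hb : m - k ≤ ℓ * (n - ℓ) := by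
    exact_mod_cast (le_mul_of_one_le_left (by positivity) (by linarith)).trans hcross
  refine le_of_mul_le_mul_right ?_ (by positivity : (0 : ℝ) < 2 ^ m)
  calc (x / 4) ^ m * 2 ^ m = (x / 2) ^ (m - k) * (x / 2) ^ k := by
        rw [pow_sub_mul_pow _ hkm, ← mul_pow]; ring
    _ ≤ (x / 2) ^ (m - k) * x ^ k := by gcongr; linarith
    _ ≤ (x / 2) ^ (m - k) * 2 ^ m := by
        gcongr; exact pow_le_two_pow_of_sq_le_exp (by positivity) (by nlinarith) hkL
    _ ≤ _ := by gcongr; exact pow_le_choose_of_mul_le (by positivity) hcross hb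

end

theorem choose_le_nsplit {n m ℓ : ℕ} (hℓ : ℓ ≤ n) (hm : ℓ.choose 2 ≤ m) :
    (ℓ * (n - ℓ)).choose (m - ℓ.choose 2) ≤ Nsplit n m ℓ := by
  set A : Finset (Fin n) := {i | (i : ℕ) < ℓ}
  have hA : #A = ℓ := by rw [Fin.card_filter_val_lt, min_eq_right hℓ]
  have h := choose_le_card_completeOn_emptyOff A (m := m) (by rwa [hA])
  rw [card_compl, Fintype.card_fin, hA] at h
  refine h.trans (Nat.card_congr (Equiv.subtypeEquivRight fun G => ?_)).le
  simp [A, not_lt]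

theorem nsplit_le_scard (n m ℓ : ℕ) : Nsplit n m ℓ ≤ Scard n m :=
  let e := Subtype.impEmbedding _ _ fun (G : SimpleGraph (Fin n)) ⟨hm, hK, hI⟩ =>
    (⟨⟨{v | (v : ℕ) < ℓ}, fun v hv w hw => hK v w hv hw,
      fun v hv w hw => hI v w (not_lt.1 hv) (not_lt.1 hw)⟩, hm⟩ : G.IsSplit ∧ _)
  Nat.card_le_card_of_injective e e.injective

theorem split_count_lower_bound_general :
    ∃ c : ℝ, 0 < c ∧ ∃ lam : ℝ, 0 < lam ∧ ∃ N : ℕ, ∀ n : ℕ, N ≤ n → ∀ m : ℕ, N ≤ m →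
      (m : ℝ) ≤ (n : ℝ) ^ 2 / 4 → (m : ℝ) ≤ lam * (n : ℝ) ^ 2 →
      (Scard n m : ℝ) ≥
          (Nsplit n m ⌈Real.sqrt ((m : ℝ) / Real.log ((n : ℝ) ^ 2 / m))⌉₊ : ℝ) ∧
      (Nsplit n m ⌈Real.sqrt ((m : ℝ) / Real.log ((n : ℝ) ^ 2 / m))⌉₊ : ℝ) ≥
          (c * n / Real.sqrt (m * Real.log ((n : ℝ) ^ 2 / m))) ^ m := by
  refine ⟨1 / 4, by norm_num, exp (-8), exp_pos _, 1, fun n _ m hm _ hlam => ⟨?_, ?_⟩⟩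
  · exact_mod_cast nsplit_le_scard n m _
  have hm0 : (0 : ℝ) < m := by exact_mod_cast hm
  have hexp : exp 8 ≤ (n : ℝ) ^ 2 / m := by
    rw [le_div_iff₀ hm0]
    calc exp 8 * m ≤ exp 8 * (exp (-8) * n ^ 2) := by gcongr
      _ = n ^ 2 := by rw [← mul_assoc, ← exp_add]; norm_num
  set L := log ((n : ℝ) ^ 2 / m)
  have hL : 8 ≤ L := (le_log_iff_exp_le ((exp_pos 8).trans_le hexp)).2 hexp
  have hn : (n : ℝ) ^ 2 = m * exp L := by
    rw [exp_log ((exp_pos 8).trans_le hexp)]; field_simp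
  calc (1 / 4 * n / √(m * L)) ^ m = (n / √(m * L) / 4) ^ m := by ring
    _ ≤ _ := pow_le_choose_ceil_sqrt hm hL hn
    _ ≤ _ := by exact_mod_cast choose_le_nsplit (ceil_sqrt_div_le hm hL hn)
                  (choose_two_ceil_sqrt_div_le (by linarith))

/-- For every `γ > 0` there is a constant `c > 0` such that for all sufficiently large
`n` and all sufficiently large `m ≤ n²/4`: the number of split graphs on `{1,…,n}` with
`m` edges is at least `N_{n,m}(ℓ)` for `ℓ = ⌈√(m / log(n²/m))⌉`, and moreover
`N_{n,m}(ℓ) ≥ (c n / √(m log(n²/m)))^m` whenever `m ≤ λ n²` for a sufficiently small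
absolute constant `λ > 0`. -/
theorem split_count_lower_bound (γ : ℝ) (hγ : 0 < γ) :
    ∃ c : ℝ, 0 < c ∧ ∃ lam : ℝ, 0 < lam ∧ ∃ N : ℕ, ∀ n : ℕ, N ≤ n → ∀ m : ℕ, N ≤ m →
      (m : ℝ) ≤ (n : ℝ) ^ 2 / 4 → (m : ℝ) ≤ lam * (n : ℝ) ^ 2 →
      (Scard n m : ℝ) ≥
          (Nsplit n m ⌈Real.sqrt ((m : ℝ) / Real.log ((n : ℝ) ^ 2 / m))⌉₊ : ℝ) ∧
      (Nsplit n m ⌈Real.sqrt ((m : ℝ) / Real.log ((n : ℝ) ^ 2 / m))⌉₊ : ℝ) ≥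
          (c * n / Real.sqrt (m * Real.log ((n : ℝ) ^ 2 / m))) ^ m :=
  split_count_lower_bound_general
end
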